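/- Theorem 4.2, case B4. In addition to the common setup, assume b11 = b12, σ11 = σ12, b21 = b22, σ21 = σ22, and K₁ := K_{11} = K_{12} < K_{21} = K_{22} =: K₂; assume c12 < 0, c21 > 0, χ12 < 0, χ21 > 0, c12 + c21 > 0 and χ12 + χ21 > 0 (Condition B4). Then the quadruple v11(x) = K₂·x^γ − c12 + χ12, v12(x) = K₂·x^γ − c12, v21(x) = K₂·x^γ + χ12, v22(x) = K₂·x^γ solves the QVI system at every x > 0. -/

import Mathlib

/-- Generator of a one-dimensional geometric Brownian motion with drift `b` and
volatility `σ`: `(L v)(x) = (1/2)σ²x²v''(x) + b x v'(x)`. -/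
noncomputable def Lop (b σ : ℝ) (v : ℝ → ℝ) (x : ℝ) : ℝ :=
  (1/2) * σ^2 * x^2 * deriv (deriv v) x + b * x * deriv v x

/-- The quadruple `(v11, v12, v21, v22)` solves the Isaacs system of
quasi-variational inequalities at the point `x`, with profit `f(x) = x^γ`. -/
def solvesQVI (r γ c12 c21 χ12 χ21 b11 σ11 b12 σ12 b21 σ21 b22 σ22 : ℝ)
    (v11 v12 v21 v22 : ℝ → ℝ) (x : ℝ) : Prop :=
  max (min (r * v11 x - Lop b11 σ11 v11 x - x ^ γ) (v11 x - (v21 x - c12)))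
      (v11 x - (v12 x + χ12)) = 0 ∧
  max (min (r * v12 x - Lop b12 σ12 v12 x - x ^ γ) (v12 x - (v22 x - c12)))
      (v12 x - (v11 x + χ21)) = 0 ∧
  max (min (r * v21 x - Lop b21 σ21 v21 x - x ^ γ) (v21 x - (v11 x - c21)))
      (v21 x - (v22 x + χ12)) = 0 ∧
  max (min (r * v22 x - Lop b22 σ22 v22 x - x ^ γ) (v22 x - (v12 x - c21)))
      (v22 x - (v21 x + χ21)) = 0

/-!
Every candidate value function is `K₂ x^γ` plus a constant `C`, and `x^γ` is an eigenfunction of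
each generator, so the continuation residual `r v - L v - x^γ` equals `(K₂ dᵢ - 1) x^γ + r C`,
where `dᵢ = 1 / Kᵢ` is the discount rate of regime `i`. In regime 2 it reduces to `r C`; in
regime 1 it is larger, because `K₁ < K₂` means `K₂ d₁ > 1`. The switching obstacles differ from
the candidates by the constants `c12, c21, χ12, χ21`, and in each of the four inequalities the sign
conditions single out a term that vanishes while the others have the right sign.
-/

theorem Lop_add_const (b σ : ℝ) (f : ℝ → ℝ) (C : ℝ) :
    Lop b σ (fun y => f y + C) = Lop b σ f := by
  funext x
  simp only [Lop, deriv_add_const']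

theorem Lop_sub_const (b σ : ℝ) (f : ℝ → ℝ) (C : ℝ) :
    Lop b σ (fun y => f y - C) = Lop b σ f := by
  funext x
  simp only [Lop, deriv_sub_const_fun]

theorem Lop_const_mul_rpow (b σ K γ : ℝ) {x : ℝ} (hx : 0 < x) :
    Lop b σ (fun y => K * y ^ γ) x = K * (b * γ - (1/2) * σ^2 * γ * (1 - γ)) * x ^ γ := by
  have h₂ : x ^ 2 * x ^ (γ - 1 - 1) = x ^ γ := by
    rw [← Real.rpow_natCast, ← Real.rpow_add hx]; ring_nf
  have h₁ : x * x ^ (γ - 1) = x ^ γ := by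
    rw [Real.rpow_sub_one hx.ne']; field_simp
  simp only [Lop, deriv_const_mul_field', deriv_const_mul_field, Real.deriv_rpow_const]
  linear_combination (1/2 * σ^2 * K * γ * (γ - 1)) * h₂ + (b * K * γ) * h₁

theorem thm4_2_B4_general
    (r γ c12 c21 χ12 χ21 : ℝ)
    (b11 σ11 b12 σ12 b21 σ21 b22 σ22 : ℝ)
    (K11 K21 : ℝ)
    (hr : 0 < r)
    (hd11 : 0 < r - b11*γ + (1/2)*σ11^2*γ*(1-γ))
    (hd21 : 0 < r - b21*γ + (1/2)*σ21^2*γ*(1-γ))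
    (hK11 : K11 = 1/(r - b11*γ + (1/2)*σ11^2*γ*(1-γ)))
    (hK21 : K21 = 1/(r - b21*γ + (1/2)*σ21^2*γ*(1-γ)))
    (heqb12 : b12 = b11) (heqσ12 : σ12 = σ11)
    (heqb22 : b22 = b21) (heqσ22 : σ22 = σ21)
    (K₁ K₂ : ℝ) (hK₁ : K₁ = K11) (hK₂ : K₂ = K21)
    (hKlt : K₁ < K₂)
    (hc12 : c12 < 0) (hχ12 : χ12 < 0)
    (hcsum : 0 < c12 + c21) (hχsum : 0 < χ12 + χ21)
    :
    ∀ x : ℝ, 0 < x →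
      solvesQVI r γ c12 c21 χ12 χ21 b11 σ11 b12 σ12 b21 σ21 b22 σ22
        (fun y => K₂ * y ^ γ - c12 + χ12)
        (fun y => K₂ * y ^ γ - c12)
        (fun y => K₂ * y ^ γ + χ12)
        (fun y => K₂ * y ^ γ) x := by
  intro x hx
  subst b12 σ12 b22 σ22
  have hxγ : 0 < x ^ γ := Real.rpow_pos_of_pos hx γ
  have hK₂d₁ : x ^ γ < K₂ * (r - b11*γ + (1/2)*σ11^2*γ*(1-γ)) * x ^ γ := by
    rw [hK₁, hK11, div_lt_iff₀ hd11] at hKlt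
    exact lt_mul_of_one_lt_left hxγ hKlt
  have hK₂d₂ : K₂ * (r - b21*γ + (1/2)*σ21^2*γ*(1-γ)) * x ^ γ = x ^ γ := by
    rw [hK₂, hK21, one_div_mul_cancel hd21.ne', one_mul]
  have hrc12 : r * c12 < 0 := mul_neg_of_pos_of_neg hr hc12
  have hrχ12 : r * χ12 < 0 := mul_neg_of_pos_of_neg hr hχ12
  simp only [solvesQVI, Lop_add_const, Lop_sub_const, Lop_const_mul_rpow _ _ _ _ hx]
  refine ⟨?_, ?_, ?_, ?_⟩
  · rw [max_eq_right (min_le_of_right_le (by linarith))]; ring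
  · rw [min_eq_right (by linarith), max_eq_left (by linarith)]; ring
  · rw [max_eq_right (min_le_of_left_le (by linarith))]; ring
  · rw [min_eq_left (by linarith), max_eq_left (by linarith)]; linarith

theorem thm4_2_B4
    (r γ c12 c21 χ12 χ21 : ℝ)
    (b11 σ11 b12 σ12 b21 σ21 b22 σ22 : ℝ)
    (K11 K12 K21 K22 : ℝ)
    (hr : 0 < r) (hγ0 : 0 < γ) (hγ1 : γ < 1)
    (hσ11 : 0 < σ11) (hσ12 : 0 < σ12) (hσ21 : 0 < σ21) (hσ22 : 0 < σ22)
    (hd11 : 0 < r - b11*γ + (1/2)*σ11^2*γ*(1-γ))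
    (hd12 : 0 < r - b12*γ + (1/2)*σ12^2*γ*(1-γ))
    (hd21 : 0 < r - b21*γ + (1/2)*σ21^2*γ*(1-γ))
    (hd22 : 0 < r - b22*γ + (1/2)*σ22^2*γ*(1-γ))
    (hrb11 : b11 < r) (hrb12 : b12 < r) (hrb21 : b21 < r) (hrb22 : b22 < r)
    (hK11 : K11 = 1/(r - b11*γ + (1/2)*σ11^2*γ*(1-γ)))
    (hK12 : K12 = 1/(r - b12*γ + (1/2)*σ12^2*γ*(1-γ)))
    (hK21 : K21 = 1/(r - b21*γ + (1/2)*σ21^2*γ*(1-γ)))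
    (hK22 : K22 = 1/(r - b22*γ + (1/2)*σ22^2*γ*(1-γ)))
    (heqb12 : b12 = b11) (heqσ12 : σ12 = σ11)
    (heqb22 : b22 = b21) (heqσ22 : σ22 = σ21)
    (K₁ K₂ : ℝ) (hK₁ : K₁ = K11) (hK₂ : K₂ = K21)
    (hKlt : K₁ < K₂)
    (hc12 : c12 < 0) (hc21 : 0 < c21) (hχ12 : χ12 < 0) (hχ21 : 0 < χ21)
    (hcsum : 0 < c12 + c21) (hχsum : 0 < χ12 + χ21)
    :
    ∀ x : ℝ, 0 < x →
      solvesQVI r γ c12 c21 χ12 χ21 b11 σ11 b12 σ12 b21 σ21 b22 σ22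
        (fun y => K₂ * y ^ γ - c12 + χ12)
        (fun y => K₂ * y ^ γ - c12)
        (fun y => K₂ * y ^ γ + χ12)
        (fun y => K₂ * y ^ γ) x :=
  thm4_2_B4_general r γ c12 c21 χ12 χ21 b11 σ11 b12 σ12 b21 σ21 b22 σ22 K11 K21 hr hd11 hd21 hK11
    hK21 heqb12 heqσ12 heqb22 heqσ22 K₁ K₂ hK₁ hK₂ hKlt hc12 hχ12 hcsum hχsum
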